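/- Let K be a field and let C be a ℤ-indexed chain complex of K-vector spaces which is finite-dimensional in every degree, equipped with a finite filtration by subcomplexes 0 = F⁰C ⊆ F¹C ⊆ … ⊆ FⁿC = C. Then dim_t H(C) ⪯ Σ_{p=1}^{n} dim_t H(F^pC/F^{p−1}C); explicitly, there exists A : ℤ → ℕ such that for every i ∈ ℤ, Σ_{p=1}^{n} dim_K H_i(F^pC/F^{p−1}C) − dim_K H_i(C) = A i + A (i−1). In particular dim_K H_i(C) ≤ Σ_{p=1}^{n} dim_K H_i(F^pC/F^{p−1}C) for every i. -/

import Mathlib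

/-!
Each step `F^{p-1}C ↪ F^pC ↠ F^pC/F^{p-1}C` of the filtration is a short exact sequence of
complexes. By exactness of its long exact homology sequence, the dimension of `H_i` of the
middle term equals that of the outer terms minus `rank δ_{i+1} + rank δ_i`, where `δ` is the
connecting map; i.e. `dim_t H(F^pC) ⪯ dim_t H(F^{p-1}C) + dim_t H(F^pC/F^{p-1}C)`. The relation
`⪯` is transitive and compatible with addition, so these inequalities telescope down to
`dim_t H(F⁰C) = 0`.
-/

open CategoryTheory Module

/-- `P ⪯ Q` means `Q = P + (1 + t) A` for some `A` with coefficients in `ℕ`. -/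
def PoincareLE (P Q : ℤ → ℤ) : Prop :=
  ∃ A : ℤ → ℕ, ∀ i, Q i - P i = A i + A (i - 1)

infix:50 " ⪯ " => PoincareLE

namespace PoincareLE

theorem refl (P : ℤ → ℤ) : P ⪯ P :=
  ⟨0, fun i => by simp⟩

theorem trans {P Q R : ℤ → ℤ} (hPQ : P ⪯ Q) (hQR : Q ⪯ R) : P ⪯ R := by
  obtain ⟨A, hA⟩ := hPQ
  obtain ⟨B, hB⟩ := hQR
  refine ⟨A + B, fun i => ?_⟩
  push_cast [Pi.add_apply]
  linarith [hA i, hB i]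

theorem add_right {P Q : ℤ → ℤ} (h : P ⪯ Q) (R : ℤ → ℤ) : P + R ⪯ Q + R := by
  obtain ⟨A, hA⟩ := h
  exact ⟨A, fun i => by simp only [Pi.add_apply]; linarith [hA i]⟩

theorem le {P Q : ℤ → ℤ} (h : P ⪯ Q) (i : ℤ) : P i ≤ Q i := by
  obtain ⟨A, hA⟩ := h
  linarith [hA i, (A i).cast_nonneg (α := ℤ), (A (i - 1)).cast_nonneg (α := ℤ)]

theorem last_le_sum : ∀ {n : ℕ} (P : Fin (n + 1) → ℤ → ℤ) (Q : Fin n → ℤ → ℤ),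
    P 0 = 0 → (∀ p : Fin n, P p.succ ⪯ P p.castSucc + Q p) → P (Fin.last n) ⪯ ∑ p, Q p
  | 0, P, _, hP₀, _ => by simpa [hP₀] using refl 0
  | n + 1, P, Q, hP₀, hstep => by
    have ih : P (Fin.last n).castSucc ⪯ ∑ p : Fin n, Q p.castSucc :=
      last_le_sum (P ∘ Fin.castSucc) (Q ∘ Fin.castSucc) hP₀ fun p => by
        simpa only [Function.comp_apply, ← Fin.succ_castSucc] using hstep p.castSucc
    rw [Fin.sum_univ_castSucc]
    exact (hstep (Fin.last n)).trans (ih.add_right _)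

end PoincareLE

section

variable {K : Type*} [Field K]

theorem ModuleCat.finrank_eq_finrank_range_add_finrank_range {S : ShortComplex (ModuleCat K)}
    (hS : S.Exact) [FiniteDimensional K S.X₂] :
    finrank K S.X₂ = finrank K (LinearMap.range S.g.hom) + finrank K (LinearMap.range S.f.hom) := by
  rw [← LinearMap.finrank_range_add_finrank_ker S.g.hom, hS.moduleCat_range_eq_ker]

namespace HomologicalComplex

variable {ι : Type*} {c : ComplexShape ι} (C : HomologicalComplex (ModuleCat K) c)

instance finiteDimensional_homology (i : ι) [FiniteDimensional K (C.X i)] :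
    FiniteDimensional K (C.homology i) :=
  have : FiniteDimensional K (C.cycles i) := .of_injective (C.iCycles i).hom
    ((ModuleCat.mono_iff_injective _).mp inferInstance)
  .of_surjective (C.homologyπ i).hom ((ModuleCat.epi_iff_surjective _).mp inferInstance)

theorem finrank_homology_eq_zero (i : ι) [Subsingleton (C.X i)] :
    finrank K (C.homology i) = 0 :=
  have : Subsingleton (C.cycles i) :=
    ((ModuleCat.mono_iff_injective (C.iCycles i)).mp inferInstance).subsingleton
  have : Subsingleton (C.homology i) :=
    ((ModuleCat.epi_iff_surjective (C.homologyπ i)).mp inferInstance).subsingleton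
  finrank_zero_of_subsingleton

variable {X Y Z : HomologicalComplex (ModuleCat K) c} {f : X ⟶ Y} {g : Y ⟶ Z}

theorem comp_eq_zero_of_range_eq_ker
    (hfg : ∀ i, LinearMap.range (f.f i).hom = LinearMap.ker (g.f i).hom) : f ≫ g = 0 := by
  ext i x
  exact (hfg i).le (LinearMap.mem_range_self _ x)

theorem shortExact_of_range_eq_ker (hf : ∀ i, Function.Injective (f.f i))
    (hfg : ∀ i, LinearMap.range (f.f i).hom = LinearMap.ker (g.f i).hom)
    (hg : ∀ i, Function.Surjective (g.f i)) :
    (ShortComplex.mk f g (comp_eq_zero_of_range_eq_ker hfg)).ShortExact :=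
  shortExact_of_degreewise_shortExact _ fun i =>
    .mk' ((ShortComplex.moduleCat_exact_iff_range_eq_ker _).mpr (hfg i))
      ((ModuleCat.mono_iff_injective _).mpr (hf i)) ((ModuleCat.epi_iff_surjective _).mpr (hg i))

end HomologicalComplex

/-- The coefficients of the Poincaré series `dim_t H(C)`. -/
noncomputable def ChainComplex.homologyPoincareSeries (C : ChainComplex (ModuleCat K) ℤ) :
    ℤ → ℤ :=
  fun i => finrank K (C.homology i)

theorem CategoryTheory.ShortComplex.ShortExact.homologyPoincareSeries_le
    {S : ShortComplex (ChainComplex (ModuleCat K) ℤ)} (hS : S.ShortExact)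
    [∀ i, FiniteDimensional K (S.X₁.homology i)] [∀ i, FiniteDimensional K (S.X₂.homology i)]
    [∀ i, FiniteDimensional K (S.X₃.homology i)] :
    S.X₂.homologyPoincareSeries ⪯ S.X₁.homologyPoincareSeries + S.X₃.homologyPoincareSeries := by
  have rel (j : ℤ) : (ComplexShape.down ℤ).Rel (j + 1) j := rfl
  refine ⟨fun j => finrank K (LinearMap.range (hS.δ (j + 1) j (rel j)).hom), fun i => ?_⟩
  generalize hj : i - 1 = j
  obtain rfl : i = j + 1 := by omega
  have e₁ := ModuleCat.finrank_eq_finrank_range_add_finrank_range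
    (hS.homology_exact₁ _ _ (rel (j + 1)))
  have e₂ := ModuleCat.finrank_eq_finrank_range_add_finrank_range (hS.homology_exact₂ (j + 1))
  have e₃ := ModuleCat.finrank_eq_finrank_range_add_finrank_range (hS.homology_exact₃ _ _ (rel j))
  simp only [ChainComplex.homologyPoincareSeries, Pi.add_apply]
  push_cast [e₁, e₂, e₃]
  ring

end

/-- **Morse–Bott type inequality for filtered chain complexes.**
Let `K` be a field and `C` a `ℤ`-indexed chain complex of `K`-vector spaces,
finite-dimensional in every degree, equipped with a finite filtration by subcomplexes
`0 = F⁰C ⊆ F¹C ⊆ … ⊆ FⁿC = C` (encoded by degreewise injections `ι p : F^p C → F^{p+1} C`)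
with quotient complexes `Q p = F^{p+1}C / F^pC` (encoded by degreewise surjections
`π p : F^{p+1}C → Q p` with kernel the image of `ι p`).  Then
`dim_t H(C) ⪯ Σ_p dim_t H(Q p)`: there is `A : ℤ → ℕ` such that for all `i`,
`Σ_p dim H_i(Q p) − dim H_i(C) = A i + A (i−1)`; in particular
`dim H_i(C) ≤ Σ_p dim H_i(Q p)` for every `i`. -/
theorem dimt_filtration_inequality
    (K : Type) [Field K] (n : ℕ)
    (F : Fin (n + 1) → ChainComplex (ModuleCat K) ℤ)
    (Q : Fin n → ChainComplex (ModuleCat K) ℤ)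
    (hfin : ∀ (p : Fin (n + 1)) (i : ℤ), FiniteDimensional K ((F p).X i))
    (hzero : ∀ i : ℤ, Subsingleton ((F 0).X i))
    (ι : ∀ p : Fin n, F p.castSucc ⟶ F p.succ)
    (π : ∀ p : Fin n, F p.succ ⟶ Q p)
    (hinj : ∀ (p : Fin n) (i : ℤ), Function.Injective ((ι p).f i))
    (hexact : ∀ (p : Fin n) (i : ℤ),
      LinearMap.range ((ι p).f i).hom = LinearMap.ker ((π p).f i).hom)
    (hsurj : ∀ (p : Fin n) (i : ℤ), Function.Surjective ((π p).f i)) :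
    (∃ A : ℤ → ℕ, ∀ i : ℤ,
      (∑ p : Fin n, (Module.finrank K ((Q p).homology i) : ℤ)) -
        (Module.finrank K ((F (Fin.last n)).homology i) : ℤ)
        = (A i : ℤ) + (A (i - 1) : ℤ)) ∧
    (∀ i : ℤ, Module.finrank K ((F (Fin.last n)).homology i) ≤
      ∑ p : Fin n, Module.finrank K ((Q p).homology i)) := by
  have := hfin
  have := hzero
  have hQfin (p : Fin n) (i : ℤ) : FiniteDimensional K ((Q p).X i) :=
    .of_surjective ((π p).f i).hom (hsurj p i)
  have hF₀ : (F 0).homologyPoincareSeries = 0 :=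
    funext fun i => by
      simp [ChainComplex.homologyPoincareSeries, HomologicalComplex.finrank_homology_eq_zero]
  have hstep (p : Fin n) : (F p.succ).homologyPoincareSeries ⪯
      (F p.castSucc).homologyPoincareSeries + (Q p).homologyPoincareSeries :=
    have hS := HomologicalComplex.shortExact_of_range_eq_ker (hinj p) (hexact p) (hsurj p)
    hS.homologyPoincareSeries_le
  have hle : (F (Fin.last n)).homologyPoincareSeries ⪯ ∑ p, (Q p).homologyPoincareSeries :=
    PoincareLE.last_le_sum (fun p => (F p).homologyPoincareSeries) _ hF₀ hstep
  refine ⟨?_, fun i => ?_⟩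
  · obtain ⟨A, hA⟩ := hle
    exact ⟨A, fun i => by simpa [ChainComplex.homologyPoincareSeries] using hA i⟩
  · have hi := hle.le i
    simp only [ChainComplex.homologyPoincareSeries, Finset.sum_apply] at hi
    exact_mod_cast hi
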